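/- arXiv:physics/0610199 — 6 statements merged into one kernel-verified Lean document; each statement's English description precedes it below -/
import Mathlib

section
/- Let S be a set of k vertices in a finite simple graph G forming a k-community, i.e., S is a clique and all vertices of S have the same neighborhood outside S. Then every vector u supported on S whose coordinates sum to zero satisfies Au = -u, where A is the adjacency matrix. -/
/-- `S` is a `k`-community: a clique whose vertices all have the same neighbors outside `S`. -/
def IsCommunity {V : Type*} (G : SimpleGraph V) (S : Finset V) : Prop :=
  (∀ u ∈ S, ∀ v ∈ S, u ≠ v → G.Adj u v) ∧
  (∀ u ∈ S, ∀ v ∈ S, ∀ w, w ∉ S → (G.Adj u w ↔ G.Adj v w))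

/-- If `S` is a `k`-community, every vector supported on `S` whose coordinates sum to
zero satisfies `Au = -u`. -/
theorem stmt1 {V : Type*} [Fintype V] [DecidableEq V] (G : SimpleGraph V)
    [DecidableRel G.Adj] (S : Finset V) (k : ℕ) (hk : S.card = k)
    (hS : IsCommunity G S) (u : V → ℝ)
    (hsupp : ∀ v, v ∉ S → u v = 0) (hsum : ∑ v ∈ S, u v = 0) :
    (G.adjMatrix ℝ).mulVec u = -u := by
  obtain ⟨hclique, hnb⟩ := hS
  funext i
  have key : (G.adjMatrix ℝ).mulVec u i = ∑ j ∈ S, if G.Adj i j then u j else 0 := by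
    rw [Matrix.mulVec, dotProduct]
    rw [← Finset.sum_subset (Finset.subset_univ S)]
    · apply Finset.sum_congr rfl
      intro j hj
      simp [SimpleGraph.adjMatrix, ite_mul]
    · intro j _ hj
      simp [hsupp j hj]
  rw [key]
  by_cases hi : i ∈ S
  · have : ∑ j ∈ S, (if G.Adj i j then u j else 0) = ∑ j ∈ S, u j - u i := by
      rw [← Finset.add_sum_erase S _ hi]
      rw [← Finset.add_sum_erase S u hi]
      simp only [G.irrefl, if_false, zero_add]
      have : ∑ j ∈ S.erase i, (if G.Adj i j then u j else 0) = ∑ j ∈ S.erase i, u j := by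
        apply Finset.sum_congr rfl
        intro j hj
        rw [Finset.mem_erase] at hj
        rw [if_pos (hclique i hi j hj.2 (Ne.symm hj.1))]
      rw [this]; ring
    rw [this, hsum]; simp
  · rcases S.eq_empty_or_nonempty with rfl | ⟨j0, hj0⟩
    · simp [hsupp i hi]
    · by_cases hadj : G.Adj j0 i
      · have : ∑ j ∈ S, (if G.Adj i j then u j else 0) = ∑ j ∈ S, u j := by
          apply Finset.sum_congr rfl
          intro j hj
          rw [if_pos (((hnb j hj j0 hj0 i hi).2 hadj).symm)]
        rw [this, hsum]; simp [hsupp i hi]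
      · have : ∑ j ∈ S, (if G.Adj i j then u j else 0) = 0 := by
          apply Finset.sum_eq_zero
          intro j hj
          rw [if_neg (fun h => hadj ((hnb j0 hj0 j hj i hi).2 h.symm))]
        rw [this]; simp [hsupp i hi]
end

section
/- Let M be a symmetric 0-1 matrix of size m × m with all diagonal entries equal to 1. If rank(M) = 2 and M is the principal submatrix (A+I)|_S of an adjacency matrix A such that every vector in the kernel of M extends to an eigenvector of A with eigenvalue -1 supported on S, then M is, up to simultaneous permutation of rows and columns, a block-diagonal matrix with exactly two all-ones blocks. -/
open Matrix

private lemma aux_three_le_rank {n : Type*} [Fintype n] [DecidableEq n]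
    (M : Matrix n n ℝ) (i j k : n)
    (h : ∀ a b c : ℝ, (∀ r, a * M r i + b * M r j + c * M r k = 0) →
      a = 0 ∧ b = 0 ∧ c = 0) : 3 ≤ M.rank := by
  classical
  rw [Matrix.rank_eq_finrank_span_cols]
  set p := Submodule.span ℝ (Set.range Mᵀ) with hp
  have hm : ∀ t : Fin 3, Mᵀ (![i, j, k] t) ∈ p :=
    fun t => Submodule.subset_span ⟨![i, j, k] t, rfl⟩
  have hli : LinearIndependent ℝ (fun t : Fin 3 => (⟨Mᵀ (![i, j, k] t), hm t⟩ : p)) := by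
    apply LinearIndependent.of_comp p.subtype
    rw [Fintype.linearIndependent_iff]
    intro g hg
    have key : ∀ r, g 0 * M r i + g 1 * M r j + g 2 * M r k = 0 := by
      intro r
      have := congrFun hg r
      simpa [Fin.sum_univ_three, Matrix.transpose_apply, mul_comm] using this
    obtain ⟨ha, hb, hc⟩ := h _ _ _ key
    intro t
    fin_cases t <;> assumption
  have h3 := hli.fintype_card_le_finrank
  simp only [Fintype.card_fin] at h3
  exact h3

/-- Let `M = (A+I)|_{S×S}`. If `rank M = 2` and every vector in the kernel of `M`
extends (by zeros) to an eigenvector of `A` with eigenvalue `-1` supported on `S`,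
then up to simultaneous permutation `M` is block diagonal with exactly two all-ones
blocks: `S` splits into two nonempty parts and `M`'s entry is `1` exactly on pairs
from the same part. -/
theorem stmt6 {V : Type*} [Fintype V] [DecidableEq V] (G : SimpleGraph V)
    [DecidableRel G.Adj] (S : Finset V)
    (M : Matrix {v // v ∈ S} {v // v ∈ S} ℝ)
    (hM : M = (G.adjMatrix ℝ + 1).submatrix (Subtype.val) (Subtype.val))
    (hrank : M.rank = 2)
    (hker : ∀ u : V → ℝ, (∀ v, v ∉ S → u v = 0) →
      (∀ i : {v // v ∈ S}, ∑ j : {v // v ∈ S}, M i j * u j = 0) →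
      (G.adjMatrix ℝ).mulVec u = -u) :
    ∃ S₁ S₂ : Finset V, Disjoint S₁ S₂ ∧ S₁ ∪ S₂ = S ∧
      S₁.Nonempty ∧ S₂.Nonempty ∧
      (∀ i j : {v // v ∈ S},
        (M i j = 1 ↔ ((i.1 ∈ S₁ ∧ j.1 ∈ S₁) ∨ (i.1 ∈ S₂ ∧ j.1 ∈ S₂))) ∧
        (M i j = 0 ∨ M i j = 1)) := by
  classical
  -- entry description
  have hent : ∀ i j : {v // v ∈ S},
      M i j = if i.1 = j.1 then 1 else if G.Adj i.1 j.1 then 1 else 0 := by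
    intro i j
    rw [hM]
    by_cases h : i.1 = j.1
    · simp [Matrix.submatrix_apply, Matrix.add_apply, Matrix.one_apply, h]
    · simp [Matrix.submatrix_apply, Matrix.add_apply, Matrix.one_apply, h]
  have h01 : ∀ i j : {v // v ∈ S}, M i j = 0 ∨ M i j = 1 := by
    intro i j; rw [hent]; split_ifs <;> simp
  have hdiag : ∀ i : {v // v ∈ S}, M i i = 1 := by
    intro i; rw [hent]; simp
  have hsym : ∀ i j : {v // v ∈ S}, M i j = M j i := by
    intro i j
    rw [hent, hent]
    by_cases h : i.1 = j.1
    · simp [h]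
    · rw [if_neg h, if_neg (show ¬(j.1 = i.1) from fun hh => h hh.symm)]
      exact if_congr (G.adj_comm i.1 j.1) rfl rfl
  -- transitivity of the relation `M i j = 1`
  have htrans : ∀ i j k : {v // v ∈ S}, M i j = 1 → M j k = 1 → M i k = 1 := by
    intro i j k hij hjk
    rcases h01 i k with h0 | h1
    · exfalso
      have h3 : 3 ≤ M.rank := by
        apply aux_three_le_rank M i j k
        intro a b c hr
        have e1 : a + b = 0 := by
          have := hr i; rw [hdiag, hij, h0] at this; linarith
        have e2 : a + b + c = 0 := by
          have := hr j; rw [hsym j i, hij, hdiag, hjk] at this; linarith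
        have e3 : b + c = 0 := by
          have := hr k; rw [hsym k i, h0, hsym k j, hjk, hdiag] at this; linarith
        refine ⟨by linarith, by linarith, by linarith⟩
      omega
    · exact h1
  -- the index type is nonempty
  have hTne : Nonempty {v // v ∈ S} := by
    by_contra h
    rw [not_nonempty_iff] at h
    have := M.rank_le_card_height
    rw [hrank] at this
    simp [Fintype.card_eq_zero] at this
  obtain ⟨i₀⟩ := hTne
  -- there is an element not related to i₀
  have hj₀ : ∃ j₀ : {v // v ∈ S}, M j₀ i₀ = 0 := by
    by_contra h
    push_neg at h
    have hall : ∀ r, M r i₀ = 1 := fun r => (h01 r i₀).resolve_left (h r)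
    have hall2 : ∀ r s, M r s = 1 := fun r s =>
      htrans r i₀ s (hall r) (by rw [hsym i₀ s]; exact hall s)
    have hle : M.rank ≤ 1 := by
      rw [Matrix.rank_eq_finrank_span_cols]
      have hsub : Set.range Mᵀ ⊆ ({fun _ => (1 : ℝ)} : Set _) := by
        rintro _ ⟨c, rfl⟩
        have : Mᵀ c = fun _ => (1 : ℝ) := by
          ext r; simp [Matrix.transpose_apply, hall2]
        simp [this]
      calc Module.finrank ℝ (Submodule.span ℝ (Set.range Mᵀ))
          ≤ Module.finrank ℝ (Submodule.span ℝ ({fun _ => (1 : ℝ)} : Set _)) :=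
            Submodule.finrank_mono (Submodule.span_mono hsub)
        _ ≤ _ := by
            simpa using finrank_span_le_card ({fun _ => (1 : ℝ)} : Set ({v // v ∈ S} → ℝ))
    omega
  obtain ⟨j₀, hj0⟩ := hj₀
  -- every element is related to i₀ or to j₀
  have hclass : ∀ r : {v // v ∈ S}, M r i₀ = 1 ∨ M r j₀ = 1 := by
    intro r
    by_contra h
    push_neg at h
    have hr1 : M r i₀ = 0 := (h01 r i₀).resolve_right h.1
    have hr2 : M r j₀ = 0 := (h01 r j₀).resolve_right h.2
    have h3 : 3 ≤ M.rank := by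
      apply aux_three_le_rank M i₀ j₀ r
      intro a b c hcomb
      have e1 : a = 0 := by
        have := hcomb i₀
        rw [hdiag, hsym i₀ j₀, hj0, hsym i₀ r, hr1] at this; linarith
      have e2 : b = 0 := by
        have := hcomb j₀
        rw [hj0, hdiag, hsym j₀ r, hr2] at this; linarith
      have e3 : c = 0 := by
        have := hcomb r
        rw [hr1, hr2, hdiag] at this; linarith
      exact ⟨e1, e2, e3⟩
    omega
  -- the two parts
  refine ⟨S.filter (fun v => ∀ h : v ∈ S, M ⟨v, h⟩ i₀ = 1),
    S \ S.filter (fun v => ∀ h : v ∈ S, M ⟨v, h⟩ i₀ = 1),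
    Finset.disjoint_sdiff, Finset.union_sdiff_of_subset (Finset.filter_subset _ _),
    ⟨i₀.1, Finset.mem_filter.mpr ⟨i₀.2, fun _ => hdiag i₀⟩⟩,
    ⟨j₀.1, Finset.mem_sdiff.mpr ⟨j₀.2, fun hc => by
      have := (Finset.mem_filter.mp hc).2 j₀.2
      rw [hj0] at this; norm_num at this⟩⟩, ?_⟩
  intro i j
  have memS₁ : ∀ k : {v // v ∈ S},
      k.1 ∈ S.filter (fun v => ∀ h : v ∈ S, M ⟨v, h⟩ i₀ = 1) ↔ M k i₀ = 1 := by
    intro k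
    rw [Finset.mem_filter]
    exact ⟨fun h => h.2 k.2, fun h => ⟨k.2, fun _ => h⟩⟩
  refine ⟨⟨?_, ?_⟩, h01 i j⟩
  · intro h1
    by_cases hi : M i i₀ = 1
    · left
      refine ⟨(memS₁ i).mpr hi, (memS₁ j).mpr ?_⟩
      exact htrans j i i₀ (by rw [hsym j i]; exact h1) hi
    · right
      have hj : M j i₀ ≠ 1 := fun hj => hi (htrans i j i₀ h1 hj)
      exact ⟨Finset.mem_sdiff.mpr ⟨i.2, fun hc => hi ((memS₁ i).mp hc)⟩,
        Finset.mem_sdiff.mpr ⟨j.2, fun hc => hj ((memS₁ j).mp hc)⟩⟩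
  · rintro (⟨hi, hj⟩ | ⟨hi, hj⟩)
    · have hi' := (memS₁ i).mp hi
      have hj' := (memS₁ j).mp hj
      exact htrans i i₀ j hi' (by rw [hsym i₀ j]; exact hj')
    · have hi' : M i i₀ = 0 :=
        (h01 i i₀).resolve_right (fun hc => (Finset.mem_sdiff.mp hi).2 ((memS₁ i).mpr hc))
      have hj' : M j i₀ = 0 :=
        (h01 j i₀).resolve_right (fun hc => (Finset.mem_sdiff.mp hj).2 ((memS₁ j).mpr hc))
      have hi2 : M i j₀ = 1 := (hclass i).resolve_left (by simp [hi'])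
      have hj2 : M j j₀ = 1 := (hclass j).resolve_left (by simp [hj'])
      exact htrans i j₀ j hi2 (by rw [hsym j₀ j]; exact hj2)
end

section
/- In a finite simple graph G, if S is a k-community with k ≥ 2, then the Laplacian L of G has an integer eigenvalue of multiplicity at least k - 1, namely d + 1 where d is the common degree of vertices in S. -/
open scoped Matrix

lemma comm_eigvec {V : Type*} [Fintype V] [DecidableEq V] (G : SimpleGraph V)
    [DecidableRel G.Adj] (S : Finset V) (hS : IsCommunity G S) (d : ℕ)
    (hd : ∀ v ∈ S, G.degree v = d) (a b : V) (ha : a ∈ S) (hb : b ∈ S) (hab : a ≠ b) :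
    G.lapMatrix ℝ *ᵥ (Pi.single a 1 - Pi.single b 1) =
      ((d : ℝ) + 1) • (Pi.single a 1 - Pi.single b 1) := by
  funext w
  rw [SimpleGraph.lapMatrix, Matrix.sub_mulVec, Matrix.mulVec_sub, Matrix.mulVec_sub]
  have hda : (G.adjMatrix ℝ *ᵥ Pi.single a 1) w = if G.Adj w a then 1 else 0 := by
    simp [SimpleGraph.adjMatrix_mulVec_apply, Pi.single_apply, Finset.sum_ite_eq']
  have hdb : (G.adjMatrix ℝ *ᵥ Pi.single b 1) w = if G.Adj w b then 1 else 0 := by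
    simp [SimpleGraph.adjMatrix_mulVec_apply, Pi.single_apply, Finset.sum_ite_eq']
  have hAa : (G.degMatrix ℝ *ᵥ Pi.single a 1) w = (G.degree w : ℝ) * (if w = a then 1 else 0) := by
    simp [SimpleGraph.degMatrix, Matrix.mulVec_diagonal, Pi.single_apply]
  have hAb : (G.degMatrix ℝ *ᵥ Pi.single b 1) w = (G.degree w : ℝ) * (if w = b then 1 else 0) := by
    simp [SimpleGraph.degMatrix, Matrix.mulVec_diagonal, Pi.single_apply]
  have hrhs : (((d : ℝ) + 1) • (Pi.single a 1 - Pi.single b 1 : V → ℝ)) w =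
      ((d : ℝ) + 1) * ((if w = a then 1 else 0) - (if w = b then 1 else 0)) := by
    simp [Pi.single_apply]
  simp only [Pi.sub_apply] at *
  rw [hda, hdb, hAa, hAb]
  rw [hrhs]
  by_cases hwa : w = a
  · subst hwa
    have hadj : G.Adj w b := hS.1 w ha b hb hab
    simp [G.irrefl, hadj, hd w ha, hab]
  · by_cases hwb : w = b
    · subst hwb
      have hadj : G.Adj w a := hS.1 w hb a ha hwa
      simp [hwa, G.irrefl, hadj, hd w hb]
      ring
    · by_cases hwS : w ∈ S
      · have h1 : G.Adj w a := hS.1 w hwS a ha hwa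
        have h2 : G.Adj w b := hS.1 w hwS b hb hwb
        simp [hwa, hwb, h1, h2]
      · have : G.Adj w a ↔ G.Adj w b := by
          constructor
          · intro h; exact ((hS.2 a ha b hb w hwS).mp (h.symm)).symm
          · intro h; exact ((hS.2 b hb a ha w hwS).mp (h.symm)).symm
        simp [hwa, hwb]
        by_cases h : G.Adj w a
        · simp [h, this.mp h]
        · have h2 : ¬ G.Adj w b := fun hb' => h (this.mpr hb')
          simp [h, h2]

/-- If `S` is a `k`-community with `k ≥ 2` whose vertices have common degree `d`,
then the Laplacian has the integer eigenvalue `d + 1` with multiplicity at least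
`k - 1`. -/
theorem stmt9 {V : Type*} [Fintype V] [DecidableEq V] (G : SimpleGraph V)
    [DecidableRel G.Adj] (S : Finset V) (k : ℕ) (hk : S.card = k) (hk2 : 2 ≤ k)
    (hS : IsCommunity G S) (d : ℕ) (hd : ∀ v ∈ S, G.degree v = d) :
    k - 1 ≤ Module.finrank ℝ
      (Module.End.eigenspace (Matrix.toLin' (G.lapMatrix ℝ)) ((d : ℝ) + 1)) := by
  obtain ⟨u0, hu0⟩ := Finset.card_pos.mp (show 0 < S.card by omega)
  set T := S.erase u0 with hT
  have hTcard : T.card = k - 1 := by rw [hT, Finset.card_erase_of_mem hu0, hk]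
  set E := Module.End.eigenspace (Matrix.toLin' (G.lapMatrix ℝ)) ((d : ℝ) + 1) with hE
  have hmem : ∀ v ∈ T, (Pi.single v 1 - Pi.single u0 1 : V → ℝ) ∈ E := by
    intro v hv
    rw [hE, Module.End.mem_eigenspace_iff, Matrix.toLin'_apply]
    exact comm_eigvec G S hS d hd v u0 (Finset.mem_of_mem_erase hv) hu0
      (Finset.ne_of_mem_erase hv)
  have hgli : LinearIndependent ℝ
      (fun v : T => (Pi.single (v : V) 1 - Pi.single u0 1 : V → ℝ)) := by
    rw [Fintype.linearIndependent_iff]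
    intro c hc v
    have h := congrFun hc (v : V)
    have hvu : (v : V) ≠ u0 := Finset.ne_of_mem_erase v.2
    simpa [Finset.sum_apply, Pi.single_apply, hvu, mul_ite, Subtype.coe_inj,
      Finset.sum_ite_eq] using h
  have hli : LinearIndependent ℝ (fun v : T => (⟨_, hmem v v.2⟩ : E)) :=
    LinearIndependent.of_comp E.subtype hgli
  have hcard := hli.fintype_card_le_finrank
  rw [Fintype.card_coe, hTcard] at hcard
  exact hcard
end

section
/- Let G be a finite simple graph and suppose u, v are two linearly independent eigenvectors of the adjacency matrix A with eigenvalue -1 whose supports are both equal to a set S of size 3. Then S is a triangle (clique of order 3) in G and all three vertices of S have the same neighbors outside S. -/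
private lemma tri_aux {V : Type*} {G : SimpleGraph V} {a b c : V} {u : V → ℝ}
    [DecidableRel G.Adj]
    (ha : u a ≠ 0) (hb : u b ≠ 0) (hc : u c ≠ 0)
    (ra : (if G.Adj a b then u b else 0) + (if G.Adj a c then u c else 0) = -u a)
    (rb : (if G.Adj b a then u a else 0) + (if G.Adj b c then u c else 0) = -u b)
    (rc : (if G.Adj c a then u a else 0) + (if G.Adj c b then u b else 0) = -u c) :
    G.Adj a b := by
  by_contra hnab
  have hnba : ¬ G.Adj b a := fun h => hnab h.symm
  rw [if_neg hnab] at ra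
  rw [if_neg hnba] at rb
  by_cases hac : G.Adj a c
  · rw [if_pos hac] at ra
    by_cases hbc : G.Adj b c
    · rw [if_pos hbc] at rb
      rw [if_pos hac.symm, if_pos hbc.symm] at rc
      exact hc (by linarith)
    · rw [if_neg hbc] at rb
      exact hb (by linarith)
  · rw [if_neg hac] at ra
    exact ha (by linarith)

/-- If `u, v` are linearly independent eigenvectors of the adjacency matrix with
eigenvalue `-1` whose supports both equal a set `S` of size `3`, then `S` is a
triangle and its three vertices have the same neighbors outside `S`. -/
theorem stmt11 {V : Type*} [Fintype V] [DecidableEq V] (G : SimpleGraph V)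
    [DecidableRel G.Adj] (S : Finset V) (hS : S.card = 3) (u v : V → ℝ)
    (hind : LinearIndependent ℝ ![u, v])
    (hu : (G.adjMatrix ℝ).mulVec u = -u)
    (hv : (G.adjMatrix ℝ).mulVec v = -v)
    (hsu : {i | u i ≠ 0} = (↑S : Set V))
    (hsv : {i | v i ≠ 0} = (↑S : Set V)) :
    (∀ a ∈ S, ∀ b ∈ S, a ≠ b → G.Adj a b) ∧
    (∀ a ∈ S, ∀ b ∈ S, ∀ w, w ∉ S → (G.Adj a w ↔ G.Adj b w)) := by
  obtain ⟨a, b, c, hab, hac, hbc, rfl⟩ := Finset.card_eq_three.mp hS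
  have mem : ∀ i, u i ≠ 0 ↔ (i = a ∨ i = b ∨ i = c) := by
    intro i
    have := Set.ext_iff.mp hsu i
    simpa using this
  have ha : u a ≠ 0 := (mem a).mpr (Or.inl rfl)
  have hb : u b ≠ 0 := (mem b).mpr (Or.inr (Or.inl rfl))
  have hc : u c ≠ 0 := (mem c).mpr (Or.inr (Or.inr rfl))
  have hu0 : ∀ i, i ≠ a → i ≠ b → i ≠ c → u i = 0 := by
    intro i h1 h2 h3
    by_contra h
    rcases (mem i).mp h with rfl | rfl | rfl <;> simp_all
  -- row equations
  have hrow : ∀ i, (if G.Adj i a then u a else 0) + (if G.Adj i b then u b else 0)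
      + (if G.Adj i c then u c else 0) = -u i := by
    intro i
    have hi : ∑ j, (if G.Adj i j then (1:ℝ) else 0) * u j = -u i := by
      have := congrFun hu i
      simpa [Matrix.mulVec, dotProduct] using this
    have h2 : ∑ j ∈ ({a,b,c} : Finset V), (if G.Adj i j then (1:ℝ) else 0) * u j = -u i := by
      rw [← hi]
      apply Finset.sum_subset (Finset.subset_univ _)
      intro j _ hj
      simp only [Finset.mem_insert, Finset.mem_singleton, not_or] at hj
      rw [hu0 j hj.1 hj.2.1 hj.2.2, mul_zero]
    rw [Finset.sum_insert (by simp [hab, hac]), Finset.sum_insert (by simp [hbc]),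
      Finset.sum_singleton] at h2
    simp only [ite_mul, one_mul, zero_mul] at h2
    linarith
  have naa : ¬ G.Adj a a := G.irrefl
  have nbb : ¬ G.Adj b b := G.irrefl
  have ncc : ¬ G.Adj c c := G.irrefl
  have Ra := hrow a; have Rb := hrow b; have Rc := hrow c
  rw [if_neg naa] at Ra
  rw [if_neg nbb] at Rb
  rw [if_neg ncc] at Rc
  have eab : (if G.Adj a b then u b else 0) + (if G.Adj a c then u c else 0) = -u a := by linarith
  have eac : (if G.Adj a c then u c else 0) + (if G.Adj a b then u b else 0) = -u a := by linarith
  have eba : (if G.Adj b a then u a else 0) + (if G.Adj b c then u c else 0) = -u b := by linarith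
  have ebc : (if G.Adj b c then u c else 0) + (if G.Adj b a then u a else 0) = -u b := by linarith
  have eca : (if G.Adj c a then u a else 0) + (if G.Adj c b then u b else 0) = -u c := by linarith
  have ecb : (if G.Adj c b then u b else 0) + (if G.Adj c a then u a else 0) = -u c := by linarith
  have hAB : G.Adj a b := tri_aux ha hb hc eab eba eca
  have hAC : G.Adj a c := tri_aux ha hc hb eac eca eba
  have hBC : G.Adj b c := tri_aux hb hc ha ebc ecb eab
  -- sum of u over S is zero
  have hsum0 : u a + u b + u c = 0 := by
    rw [if_pos hAB, if_pos hAC] at Ra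
    linarith
  -- outside vertices
  have hW : ∀ w, w ∉ ({a,b,c} : Finset V) →
      ((G.Adj w a ↔ G.Adj w b) ∧ (G.Adj w a ↔ G.Adj w c)) := by
    intro w hw
    simp only [Finset.mem_insert, Finset.mem_singleton, not_or] at hw
    have hw0 : u w = 0 := hu0 w hw.1 hw.2.1 hw.2.2
    have hwR := hrow w
    rw [hw0] at hwR
    by_cases p : G.Adj w a <;> by_cases q : G.Adj w b <;> by_cases r : G.Adj w c
    · simp [p, q, r]
    · rw [if_pos p, if_pos q, if_neg r] at hwR
      exact absurd (by linarith : u c = 0) hc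
    · rw [if_pos p, if_neg q, if_pos r] at hwR
      exact absurd (by linarith : u b = 0) hb
    · rw [if_pos p, if_neg q, if_neg r] at hwR
      exact absurd (by linarith : u a = 0) ha
    · rw [if_neg p, if_pos q, if_pos r] at hwR
      exact absurd (by linarith : u a = 0) ha
    · rw [if_neg p, if_pos q, if_neg r] at hwR
      exact absurd (by linarith : u b = 0) hb
    · rw [if_neg p, if_neg q, if_pos r] at hwR
      exact absurd (by linarith : u c = 0) hc
    · simp [p, q, r]
  constructor
  · intro x hx y hy hxy
    simp only [Finset.mem_insert, Finset.mem_singleton] at hx hy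
    rcases hx with rfl | rfl | rfl <;> rcases hy with rfl | rfl | rfl <;>
      first
        | exact absurd rfl hxy
        | exact hAB
        | exact hAC
        | exact hBC
        | exact hAB.symm
        | exact hAC.symm
        | exact hBC.symm
  · intro x hx y hy w hw
    obtain ⟨h1, h2⟩ := hW w hw
    rw [G.adj_comm x w, G.adj_comm y w]
    simp only [Finset.mem_insert, Finset.mem_singleton] at hx hy
    rcases hx with rfl | rfl | rfl <;> rcases hy with rfl | rfl | rfl <;> tauto
end

section
/- Let S be a set of k vertices in a finite simple graph G. The space of vectors u supported on S with Au = -u has dimension k - 1 if and only if (A+I)|_{S×S} is the all-ones matrix (i.e., S is a clique) and every vertex outside S is adjacent to either all or none of the vertices of S. -/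
open Matrix

/-- The space of vectors supported on `S` that are eigenvectors of the adjacency
matrix with eigenvalue `-1` (equivalently, lie in the kernel of `A + I`). -/
noncomputable def supportedEigenspace {V : Type*} [Fintype V] [DecidableEq V]
    (G : SimpleGraph V) [DecidableRel G.Adj] (S : Finset V) : Submodule ℝ (V → ℝ) :=
  LinearMap.ker (Matrix.toLin' (G.adjMatrix ℝ + 1)) ⊓
    ⨅ v ∈ (↑S : Set V)ᶜ, LinearMap.ker (LinearMap.proj v : (V → ℝ) →ₗ[ℝ] ℝ)

namespace Stmt12Aux

open Module

variable {V : Type*} [Fintype V] [DecidableEq V]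

/-- Functions supported on `S`. -/
noncomputable def suppSpace (S : Finset V) : Submodule ℝ (V → ℝ) :=
  ⨅ v ∈ (↑S : Set V)ᶜ, LinearMap.ker (LinearMap.proj v : (V → ℝ) →ₗ[ℝ] ℝ)

set_option linter.unusedSectionVars false

lemma mem_suppSpace {S : Finset V} {u : V → ℝ} :
    u ∈ suppSpace S ↔ ∀ v ∉ S, u v = 0 := by
  simp [suppSpace, Submodule.mem_iInf]

noncomputable def restr (S : Finset V) : suppSpace S →ₗ[ℝ] (S → ℝ) where
  toFun u s := u.1 s
  map_add' := by intros; rfl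
  map_smul' := by intros; rfl

lemma restr_bij (S : Finset V) : Function.Bijective (restr S) := by
  constructor
  · intro u v h
    ext x
    by_cases hx : x ∈ S
    · exact congrFun h ⟨x, hx⟩
    · rw [mem_suppSpace.mp u.2 x hx, mem_suppSpace.mp v.2 x hx]
  · intro f
    refine ⟨⟨fun v => if h : v ∈ S then f ⟨v, h⟩ else 0, ?_⟩, ?_⟩
    · exact mem_suppSpace.mpr fun v hv => dif_neg hv
    · ext s; exact dif_pos s.2

lemma finrank_suppSpace (S : Finset V) : finrank ℝ (suppSpace S) = S.card := by
  rw [LinearEquiv.finrank_eq (LinearEquiv.ofBijective (restr S) (restr_bij S))]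
  simp [Module.finrank_fintype_fun_eq_card]

lemma mem_W {G : SimpleGraph V} [DecidableRel G.Adj] {S : Finset V} {u : V → ℝ} :
    u ∈ supportedEigenspace G S ↔
      ((G.adjMatrix ℝ + 1) *ᵥ u = 0) ∧ ∀ v ∉ S, u v = 0 := by
  have : supportedEigenspace G S =
      LinearMap.ker (Matrix.toLin' (G.adjMatrix ℝ + 1)) ⊓ suppSpace S := rfl
  rw [this, Submodule.mem_inf, LinearMap.mem_ker, Matrix.toLin'_apply, mem_suppSpace]

/-- Sum over `S` as a linear functional on `suppSpace S`. -/
noncomputable def sumMap (S : Finset V) : suppSpace S →ₗ[ℝ] ℝ where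
  toFun u := ∑ v ∈ S, u.1 v
  map_add' := by intros; simp [Finset.sum_add_distrib]
  map_smul' := by intros; simp [Finset.mul_sum]

noncomputable def evalMap (G : SimpleGraph V) [DecidableRel G.Adj] (S : Finset V)
    (x y : V) : suppSpace S →ₗ[ℝ] ℝ × ℝ :=
  (((LinearMap.proj x : (V → ℝ) →ₗ[ℝ] ℝ).comp (G.adjMatrix ℝ + 1).mulVecLin).prod
    ((LinearMap.proj y : (V → ℝ) →ₗ[ℝ] ℝ).comp (G.adjMatrix ℝ + 1).mulVecLin)).comp
    (suppSpace S).subtype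

lemma evalMap_apply (G : SimpleGraph V) [DecidableRel G.Adj] (S : Finset V)
    (x y : V) (u : suppSpace S) :
    evalMap G S x y u =
      (((G.adjMatrix ℝ + 1) *ᵥ u.1) x, ((G.adjMatrix ℝ + 1) *ᵥ u.1) y) := rfl

lemma bound_lemma (G : SimpleGraph V) [DecidableRel G.Adj] (S : Finset V) (x y : V)
    (hsurj : Function.Surjective (evalMap G S x y)) :
    finrank ℝ (supportedEigenspace G S) + 2 ≤ S.card := by
  have hle : supportedEigenspace G S ≤
      Submodule.map (suppSpace S).subtype (LinearMap.ker (evalMap G S x y)) := by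
    intro u hu
    obtain ⟨h1, h2⟩ := mem_W.mp hu
    refine ⟨⟨u, mem_suppSpace.mpr h2⟩, ?_, rfl⟩
    show evalMap G S x y _ = 0
    rw [evalMap_apply]
    simp [h1]
  have h1 : finrank ℝ (supportedEigenspace G S) ≤
      finrank ℝ (LinearMap.ker (evalMap G S x y)) := by
    rw [← Submodule.finrank_map_subtype_eq (suppSpace S) (LinearMap.ker (evalMap G S x y))]
    exact Submodule.finrank_mono hle
  have h2 := (evalMap G S x y).finrank_range_add_finrank_ker
  rw [LinearMap.range_eq_top.mpr hsurj, finrank_top, finrank_suppSpace] at h2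
  have h3 : finrank ℝ (ℝ × ℝ) = 2 := by simp
  omega

lemma surj_of {M₀ : Type*} [AddCommGroup M₀] [Module ℝ M₀] (L : M₀ →ₗ[ℝ] ℝ × ℝ)
    (h1 : ((1 : ℝ), (0 : ℝ)) ∈ LinearMap.range L)
    (h2 : ((0 : ℝ), (1 : ℝ)) ∈ LinearMap.range L) : Function.Surjective L := by
  rw [← LinearMap.range_eq_top, Submodule.eq_top_iff']
  rintro ⟨c, d⟩
  have := Submodule.add_mem _ (Submodule.smul_mem _ c h1) (Submodule.smul_mem _ d h2)
  simpa using this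

noncomputable def ea (S : Finset V) (a : V) (ha : a ∈ S) : suppSpace S :=
  ⟨Pi.single a 1, mem_suppSpace.mpr fun v hv =>
    Pi.single_eq_of_ne (by rintro rfl; exact hv ha) 1⟩

lemma evalMap_ea (G : SimpleGraph V) [DecidableRel G.Adj] (S : Finset V) (x y : V)
    (a : V) (ha : a ∈ S) :
    evalMap G S x y (ea S a ha) =
      ((G.adjMatrix ℝ + 1) x a, (G.adjMatrix ℝ + 1) y a) := by
  rw [evalMap_apply]
  simp [ea]

lemma entry (G : SimpleGraph V) [DecidableRel G.Adj] (x y : V) :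
    (G.adjMatrix ℝ + 1) x y =
      (if G.Adj x y then (1 : ℝ) else 0) + (if x = y then 1 else 0) := by
  simp [Matrix.one_apply]

lemma sum_restrict {S : Finset V} {u : V → ℝ} (h2 : ∀ v ∉ S, u v = 0) (c : V → ℝ) :
    ∑ y, c y * u y = ∑ y ∈ S, c y * u y :=
  (Finset.sum_subset (Finset.subset_univ S)
    (fun y _ hy => by rw [h2 y hy, mul_zero])).symm

lemma mulVec_coord {G : SimpleGraph V} [DecidableRel G.Adj] (u : V → ℝ) (x : V) :
    ((G.adjMatrix ℝ + 1) *ᵥ u) x = ∑ y, (G.adjMatrix ℝ + 1) x y * u y := rfl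

lemma entry_one {G : SimpleGraph V} [DecidableRel G.Adj] {S : Finset V}
    (hclique : ∀ a ∈ S, ∀ b ∈ S, a ≠ b → G.Adj a b) {x y : V} (hx : x ∈ S) (hy : y ∈ S) :
    (G.adjMatrix ℝ + 1) x y = 1 := by
  by_cases h : x = y
  · subst h; simp [Matrix.one_apply]
  · simp [Matrix.one_apply, h, hclique x hx y hy h]

lemma W_eq {G : SimpleGraph V} [DecidableRel G.Adj] {S : Finset V}
    (hclique : ∀ a ∈ S, ∀ b ∈ S, a ≠ b → G.Adj a b)
    (hout : ∀ w, w ∉ S → (∀ a ∈ S, G.Adj a w) ∨ (∀ a ∈ S, ¬ G.Adj a w))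
    {a : V} (ha : a ∈ S) :
    supportedEigenspace G S =
      Submodule.map (suppSpace S).subtype (LinearMap.ker (sumMap S)) := by
  apply le_antisymm
  · intro u hu
    obtain ⟨h1, h2⟩ := mem_W.mp hu
    refine ⟨⟨u, mem_suppSpace.mpr h2⟩, ?_, rfl⟩
    show (∑ v ∈ S, u v) = 0
    have hA := congrFun h1 a
    rw [mulVec_coord, sum_restrict h2] at hA
    simp only [Pi.zero_apply] at hA
    rw [← hA]
    refine Finset.sum_congr rfl fun y hy => ?_
    rw [entry_one hclique ha hy, one_mul]
  · rintro _ ⟨⟨u, hu⟩, hker, rfl⟩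
    have h2 := mem_suppSpace.mp hu
    have hsum : (∑ v ∈ S, u v) = 0 := hker
    refine mem_W.mpr ⟨?_, h2⟩
    show (G.adjMatrix ℝ + 1) *ᵥ u = 0
    funext x
    simp only [Pi.zero_apply]
    rw [mulVec_coord, sum_restrict h2]
    by_cases hx : x ∈ S
    · rw [← hsum]
      exact Finset.sum_congr rfl fun y hy => by rw [entry_one hclique hx hy, one_mul]
    · rcases hout x hx with h | h
      · have hone : ∀ y ∈ S, (G.adjMatrix ℝ + 1) x y = 1 := fun y hy => by
          have hne : x ≠ y := fun e => hx (e ▸ hy)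
          simp [Matrix.one_apply, hne, (h y hy).symm]
        rw [show (0:ℝ) = ∑ v ∈ S, u v from hsum.symm]
        exact Finset.sum_congr rfl fun y hy => by rw [hone y hy, one_mul]
      · have hzero : ∀ y ∈ S, (G.adjMatrix ℝ + 1) x y = 0 := fun y hy => by
          have hne : x ≠ y := fun e => hx (e ▸ hy)
          have hna : ¬ G.Adj x y := fun hadj => h y hy hadj.symm
          simp [Matrix.one_apply, hne, hna]
        rw [Finset.sum_eq_zero fun y hy => by rw [hzero y hy, zero_mul]]

lemma sumMap_surj {S : Finset V} {a : V} (ha : a ∈ S) :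
    Function.Surjective (sumMap S) := by
  intro c
  refine ⟨c • ea S a ha, ?_⟩
  show (∑ v ∈ S, (c • (ea S a ha).1) v) = c
  simp [ea, Pi.single_apply, Finset.sum_ite_eq', ha]

lemma finrank_ker_sumMap {S : Finset V} {a : V} (ha : a ∈ S) :
    finrank ℝ (LinearMap.ker (sumMap S)) = S.card - 1 := by
  have h := (sumMap S).finrank_range_add_finrank_ker
  rw [LinearMap.range_eq_top.mpr (sumMap_surj ha), finrank_top, finrank_suppSpace] at h
  have h1 : finrank ℝ ℝ = 1 := finrank_self ℝ
  omega

end Stmt12Aux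

open Stmt12Aux Module in
/-- The space of vectors supported on `S` with `Au = -u` has dimension `k - 1`
(where `k = |S|`) iff `S` is a clique and every vertex outside `S` is adjacent to
all or none of the vertices of `S`. -/
theorem stmt12 {V : Type*} [Fintype V] [DecidableEq V] (G : SimpleGraph V)
    [DecidableRel G.Adj] (S : Finset V) (k : ℕ) (hk : S.card = k) :
    Module.finrank ℝ (supportedEigenspace G S) = k - 1 ↔
      ((∀ a ∈ S, ∀ b ∈ S, a ≠ b → G.Adj a b) ∧
       (∀ w, w ∉ S → (∀ a ∈ S, G.Adj a w) ∨ (∀ a ∈ S, ¬ G.Adj a w))) := by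
  subst hk
  constructor
  · intro hdim
    by_contra hR
    rw [not_and_or] at hR
    have key : ∃ a ∈ S, ∃ b ∈ S, a ≠ b ∧
        ∃ x y, Function.Surjective (evalMap G S x y) := by
      rcases hR with h | h
      · push_neg at h
        obtain ⟨a, ha, b, hb, hab, hnadj⟩ := h
        refine ⟨a, ha, b, hb, hab, a, b, surj_of _ ⟨ea S a ha, ?_⟩ ⟨ea S b hb, ?_⟩⟩
        · rw [evalMap_ea]
          have : ¬ G.Adj b a := fun h' => hnadj h'.symm
          simp [entry, hab, hab.symm, this]
        · rw [evalMap_ea]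
          simp [entry, hab, hab.symm, hnadj]
      · push_neg at h
        obtain ⟨w, hw, hnall, hnnone⟩ := h
        obtain ⟨a, ha, hanadj⟩ := hnall
        obtain ⟨b, hb, hbadj⟩ := hnnone
        have hab : a ≠ b := by rintro rfl; exact hanadj hbadj
        by_cases hadj : G.Adj a b
        · -- use rows w and b : L (ea b) = (1,1), L (ea a) = (0,1)
          refine ⟨a, ha, b, hb, hab, w, b, surj_of _ ?_ ⟨ea S a ha, ?_⟩⟩
          · have h11 : evalMap G S w b (ea S b hb) = (1, 1) := by
              rw [evalMap_ea]
              have hwb : w ≠ b := by rintro rfl; exact hw hb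
              simp [entry, hwb, hbadj.symm]
            have h01 : evalMap G S w b (ea S a ha) = (0, 1) := by
              rw [evalMap_ea]
              have hwa : w ≠ a := by rintro rfl; exact hw ha
              have hnwa : ¬ G.Adj w a := fun h' => hanadj h'.symm
              simp [entry, hwa, hnwa, hab.symm, hadj.symm]
            have hmem : ((1:ℝ), (1:ℝ)) - ((0:ℝ), (1:ℝ)) ∈
                LinearMap.range (evalMap G S w b) :=
              Submodule.sub_mem _ ⟨_, h11⟩ ⟨_, h01⟩
            have heq : ((1:ℝ), (0:ℝ)) = ((1:ℝ), (1:ℝ)) - ((0:ℝ), (1:ℝ)) := by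
              norm_num [Prod.ext_iff]
            rw [heq]
            exact hmem
          · rw [evalMap_ea]
            have hwa : w ≠ a := by rintro rfl; exact hw ha
            have hnwa : ¬ G.Adj w a := fun h' => hanadj h'.symm
            simp [entry, hwa, hnwa, hab.symm, hadj.symm]
        · -- a, b nonadjacent in S : same as the first case
          refine ⟨a, ha, b, hb, hab, a, b, surj_of _ ⟨ea S a ha, ?_⟩ ⟨ea S b hb, ?_⟩⟩
          · rw [evalMap_ea]
            have : ¬ G.Adj b a := fun h' => hadj h'.symm
            simp [entry, hab, hab.symm, this]
          · rw [evalMap_ea]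
            simp [entry, hab, hab.symm, hadj]
    obtain ⟨a, ha, b, hb, hab, x, y, hsurj⟩ := key
    have hbd := bound_lemma G S x y hsurj
    have hcard : 2 ≤ S.card := Finset.one_lt_card.mpr ⟨a, ha, b, hb, hab⟩
    omega
  · rintro ⟨hclique, hout⟩
    rcases S.eq_empty_or_nonempty with rfl | ⟨a, ha⟩
    · have hbot : supportedEigenspace G (∅ : Finset V) = ⊥ := by
        rw [eq_bot_iff]
        intro u hu
        have h2 := (mem_W.mp hu).2
        have : u = 0 := funext fun v => h2 v (by simp)
        simp [this]
      rw [hbot]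
      simp
    · rw [W_eq hclique hout ha, Submodule.finrank_map_subtype_eq,
        finrank_ker_sumMap ha]
end

section
/- If S_1 and S_2 are two k-communities (k ≥ 2) in a finite simple graph G with S_1 ∩ S_2 ≠ ∅, then S_1 ∪ S_2 is a clique in which all vertices have the same neighbors outside S_1 ∪ S_2; in particular S_1 ∪ S_2 is a community. -/
/-- Two intersecting `k`-communities (`k ≥ 2`) have a union which is again a
community: a clique whose vertices share the same neighbors outside the union. -/
theorem stmt13 {V : Type*} [Fintype V] [DecidableEq V] (G : SimpleGraph V) (k : ℕ) (hk : 2 ≤ k)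
    (S₁ S₂ : Finset V) (h₁ : S₁.card = k) (h₂ : S₂.card = k)
    (hc₁ : IsCommunity G S₁) (hc₂ : IsCommunity G S₂)
    (hint : (S₁ ∩ S₂).Nonempty) :
    IsCommunity G (S₁ ∪ S₂) := by
  obtain ⟨x, hx⟩ := hint
  rw [Finset.mem_inter] at hx
  obtain ⟨hx1, hx2⟩ := hx
  obtain ⟨hq1, hn1⟩ := hc₁
  obtain ⟨hq2, hn2⟩ := hc₂
  -- key: any vertex of the union has the same neighbors as x outside the union
  have key : ∀ u ∈ S₁ ∪ S₂, ∀ w, w ∉ S₁ ∪ S₂ → (G.Adj u w ↔ G.Adj x w) := by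
    intro u hu w hw
    rw [Finset.mem_union] at hu
    rw [Finset.mem_union, not_or] at hw
    rcases hu with hu | hu
    · exact hn1 u hu x hx1 w hw.1
    · exact hn2 u hu x hx2 w hw.2
  constructor
  · intro u hu v hv huv
    rw [Finset.mem_union] at hu hv
    rcases hu with hu | hu <;> rcases hv with hv | hv
    · exact hq1 u hu v hv huv
    · by_cases hv1 : v ∈ S₁
      · exact hq1 u hu v hv1 huv
      · have hxv : G.Adj x v := by
          refine hq2 x hx2 v hv ?_
          rintro rfl; exact hv1 hx1
        exact (hn1 u hu x hx1 v hv1).mpr hxv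
    · by_cases hu1 : u ∈ S₁
      · exact hq1 u hu1 v hv huv
      · have hxu : G.Adj x u := by
          refine hq2 x hx2 u hu ?_
          rintro rfl; exact hu1 hx1
        exact ((hn1 v hv x hx1 u hu1).mpr hxu).symm
    · exact hq2 u hu v hv huv
  · intro u hu v hv w hw
    rw [key u hu w hw, key v hv w hw]
end
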